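/- Let d ≥ 3 and let p be an irreducible, ℤ^d-invariant, finitely supported Markov transition kernel on ℤ^d × {1,…,N} which is centered, i.e. p⃗ = ∑_{x∈ℤ^d} ∑_{k,j} ν₀(k)·x·p_{k,j}(0,x) = 0, where ν₀ is the stationary probability vector of the stochastic matrix F(0). Then every nonnegative harmonic function for p is constant: if h : ℤ^d × {1,…,N} → [0,∞) satisfies h(x,k) = ∑_{y∈ℤ^d} ∑_{j=1}^N p_{k,j}(x,y) h(y,j) for all (x,k), then h is a constant function. In particular the Martin boundary of the chain is trivial. -/

import Mathlib

open scoped ENNReal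
open Filter Topology

noncomputable section

/-- Convolution powers of a `ℤ^d`-invariant kernel on `ℤ^d × {1,…,N}`, where
`q z k j = p_{k,j}(0,z)`; `p^{(n)}_{k,j}(x,y)` is `convPow q n (y-x) k j`. -/
def convPow {d N : ℕ} (q : (Fin d → ℤ) → Fin N → Fin N → ℝ≥0∞) :
    ℕ → (Fin d → ℤ) → Fin N → Fin N → ℝ≥0∞
  | 0 => fun z k j => if z = 0 ∧ k = j then 1 else 0
  | n + 1 => fun z k j => ∑' w : Fin d → ℤ, ∑ l : Fin N, q w k l * convPow q n (z - w) l j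

/-- Strong irreducibility: for all `x, y, k, j` there is `n₀` with `p^{(n)}_{k,j}(x,y) > 0` for
all `n ≥ n₀`. -/
def StronglyIrreducibleKer {d N : ℕ} (q : (Fin d → ℤ) → Fin N → Fin N → ℝ≥0∞) : Prop :=
  ∀ (z : Fin d → ℤ) (k j : Fin N), ∃ n₀ : ℕ, ∀ n ≥ n₀, 0 < convPow q n z k j

/-- (Weak) irreducibility: for all `x, y, k, j` there is `n` with `p^{(n)}_{k,j}(x,y) > 0`. -/
def IrreducibleKer {d N : ℕ} (q : (Fin d → ℤ) → Fin N → Fin N → ℝ≥0∞) : Prop :=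
  ∀ (z : Fin d → ℤ) (k j : Fin N), ∃ n : ℕ, 0 < convPow q n z k j

/-- Finitely supported kernel: `{(y,j) : p_{k,j}(0,y) > 0}` is finite for each `k`. -/
def FinSuppKer {d N : ℕ} (q : (Fin d → ℤ) → Fin N → Fin N → ℝ≥0∞) : Prop :=
  ∀ k : Fin N, {zj : (Fin d → ℤ) × Fin N | q zj.1 k zj.2 ≠ 0}.Finite

/-- `u · z` for `u ∈ ℝ^d`, `z ∈ ℤ^d`. -/
def dotZ {d : ℕ} (u : Fin d → ℝ) (z : Fin d → ℤ) : ℝ := ∑ i, u i * (z i : ℝ)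

/-- The matrix `F(u)` with entries `F_{k,j}(u) = ∑_{x∈ℤ^d} p_{k,j}(0,x) e^{u·x} ∈ [0,∞]`. -/
def Fmat {d N : ℕ} (q : (Fin d → ℤ) → Fin N → Fin N → ℝ≥0∞) (u : Fin d → ℝ) :
    Matrix (Fin N) (Fin N) ℝ≥0∞ :=
  Matrix.of fun k j => ∑' z : Fin d → ℤ, q z k j * ENNReal.ofReal (Real.exp (dotZ u z))

/-- The real matrix `F(u)` (meaningful when all entries are finite). -/
def FmatR {d N : ℕ} (q : (Fin d → ℤ) → Fin N → Fin N → ℝ≥0∞) (u : Fin d → ℝ) :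
    Matrix (Fin N) (Fin N) ℝ :=
  Matrix.of fun k j => (Fmat q u k j).toReal

/-- The continuous linear map `v ↦ ∑ i, m i * v i`, i.e. the linear form with gradient `m`. -/
def dotCLM {d : ℕ} (m : Fin d → ℝ) : (Fin d → ℝ) →L[ℝ] ℝ :=
  ∑ i, m i • (ContinuousLinearMap.proj i : (Fin d → ℝ) →L[ℝ] ℝ)

/-- The drift vector `p⃗ = ∑_{x} ∑_{k,j} ν₀(k)·x·p_{k,j}(0,x)`. -/
def driftVec {d N : ℕ} (q : (Fin d → ℤ) → Fin N → Fin N → ℝ≥0∞) (ν₀ : Fin N → ℝ) :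
    Fin d → ℝ :=
  fun i => ∑' z : Fin d → ℤ, ∑ k, ∑ j, ν₀ k * (z i : ℝ) * (q z k j).toReal

/-- Euclidean norm on `ℤ^d`. -/
def eNormZ {d : ℕ} (z : Fin d → ℤ) : ℝ := Real.sqrt (∑ i, ((z i : ℝ)) ^ 2)

/-- Euclidean norm on `ℝ^d`. -/
def eNormR {d : ℕ} (v : Fin d → ℝ) : ℝ := Real.sqrt (∑ i, (v i) ^ 2)

/-- The value of the quadratic form associated to a symmetric matrix. -/
def quadVal {d : ℕ} (M : Matrix (Fin d) (Fin d) ℝ) (v : Fin d → ℝ) : ℝ :=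
  dotProduct v (M.mulVec v)

section S17
variable {d N : ℕ} {q : (Fin d → ℤ) → Fin N → Fin N → ℝ≥0∞}

/-- support finset of row `k` -/
def Tk (hfs : FinSuppKer q) (k : Fin N) : Finset ((Fin d → ℤ) × Fin N) :=
  (hfs k).toFinset

lemma mem_Tk {hfs : FinSuppKer q} {k : Fin N} {zj : (Fin d → ℤ) × Fin N} :
    zj ∈ Tk hfs k ↔ q zj.1 k zj.2 ≠ 0 := Set.Finite.mem_toFinset _

lemma q_notmem_Tk {hfs : FinSuppKer q} {k : Fin N} {zj : (Fin d → ℤ) × Fin N}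
    (h : zj ∉ Tk hfs k) : q zj.1 k zj.2 = 0 := by
  by_contra h'; exact h (mem_Tk.2 h')

lemma pull_const (c : ℝ≥0∞) (F : (Fin d → ℤ) → Fin N → ℝ≥0∞) :
    ∑' a, ∑ i, c * F a i = c * ∑' a, ∑ i, F a i := by
  rw [← ENNReal.tsum_mul_left]
  exact tsum_congr fun a => (Finset.mul_sum _ _ _).symm

lemma swap4 (F : (Fin d → ℤ) → Fin N → (Fin d → ℤ) → Fin N → ℝ≥0∞) :
    ∑' a, ∑ i, ∑' b, ∑ j, F a i b j = ∑' b, ∑ j, ∑' a, ∑ i, F a i b j :=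
  calc ∑' a, ∑ i, ∑' b, ∑ j, F a i b j
      = ∑' a, ∑' b, ∑ i, ∑ j, F a i b j :=
        tsum_congr fun a => (Summable.tsum_finsetSum fun _ _ => ENNReal.summable).symm
    _ = ∑' b, ∑' a, ∑ i, ∑ j, F a i b j := ENNReal.tsum_comm
    _ = ∑' b, ∑' a, ∑ j, ∑ i, F a i b j := by
        exact tsum_congr fun b => tsum_congr fun a => Finset.sum_comm
    _ = ∑' b, ∑ j, ∑' a, ∑ i, F a i b j :=
        tsum_congr fun b => Summable.tsum_finsetSum fun _ _ => ENNReal.summable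

/-- rewriting a one-step sum as a finite sum over the support -/
lemma row_tsum (hfs : FinSuppKer q) (A : (Fin d → ℤ) → Fin N → ℝ≥0∞)
    (x : Fin d → ℤ) (k : Fin N) :
    ∑' y, ∑ j, q (y - x) k j * A y j
      = ∑ zj ∈ Tk hfs k, q zj.1 k zj.2 * A (x + zj.1) zj.2 := by
  have h1 : ∑' y, ∑ j, q (y - x) k j * A y j
      = ∑' yj : (Fin d → ℤ) × Fin N, q (yj.1 - x) k yj.2 * A yj.1 yj.2 := by
    rw [ENNReal.tsum_prod']
    exact tsum_congr fun y => (tsum_fintype _).symm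
  rw [h1]
  have h2 : ∑' yj : (Fin d → ℤ) × Fin N, q (yj.1 - x) k yj.2 * A yj.1 yj.2
      = ∑' zj : (Fin d → ℤ) × Fin N, q zj.1 k zj.2 * A (x + zj.1) zj.2 := by
    rw [← Equiv.tsum_eq ((Equiv.addLeft x).prodCongr (Equiv.refl (Fin N)))
      (fun yj => q (yj.1 - x) k yj.2 * A yj.1 yj.2)]
    exact tsum_congr fun zj => by simp [Equiv.prodCongr, add_sub_cancel_left]
  rw [h2]
  exact tsum_eq_sum fun zj hzj => by rw [q_notmem_Tk hzj, zero_mul]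

lemma q_le_one (hM : ∀ k : Fin N, (∑' z : Fin d → ℤ, ∑ j, q z k j) = 1)
    (z : Fin d → ℤ) (k j : Fin N) : q z k j ≤ 1 := by
  calc q z k j ≤ ∑ j', q z k j' :=
        Finset.single_le_sum (fun _ _ => zero_le) (Finset.mem_univ j)
    _ ≤ ∑' z', ∑ j', q z' k j' := ENNReal.le_tsum z
    _ = 1 := hM k

lemma q_ne_top (hM : ∀ k : Fin N, (∑' z : Fin d → ℤ, ∑ j, q z k j) = 1)
    (z : Fin d → ℤ) (k j : Fin N) : q z k j ≠ ∞ :=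
  ((q_le_one hM z k j).trans_lt ENNReal.one_lt_top).ne

lemma rowsum_one (hM : ∀ k : Fin N, (∑' z : Fin d → ℤ, ∑ j, q z k j) = 1)
    (hfs : FinSuppKer q) (k : Fin N) :
    ∑ zj ∈ Tk hfs k, q zj.1 k zj.2 = 1 := by
  have := row_tsum hfs (fun _ _ => 1) 0 k
  simp only [mul_one, sub_zero] at this
  rw [← this, hM k]

lemma rowsum_one_real (hM : ∀ k : Fin N, (∑' z : Fin d → ℤ, ∑ j, q z k j) = 1)
    (hfs : FinSuppKer q) (k : Fin N) :
    ∑ zj ∈ Tk hfs k, (q zj.1 k zj.2).toReal = 1 := by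
  rw [← ENNReal.toReal_sum (fun zj _ => q_ne_top hM zj.1 k zj.2), rowsum_one hM hfs k,
    ENNReal.toReal_one]

/-- harmonicity as a finite-sum real condition -/
def HarmOn (hfs : FinSuppKer q) (g : (Fin d → ℤ) → Fin N → ℝ) : Prop :=
  ∀ (x : Fin d → ℤ) (k : Fin N),
    g x k = ∑ zj ∈ Tk hfs k, (q zj.1 k zj.2).toReal * g (x + zj.1) zj.2

/-- converting the `tsum` form of harmonicity to the finite-sum form -/
lemma row_tsum_real (hfs : FinSuppKer q) (g : (Fin d → ℤ) → Fin N → ℝ)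
    (x : Fin d → ℤ) (k : Fin N) :
    ∑' y, ∑ j, (q (y - x) k j).toReal * g y j
      = ∑ zj ∈ Tk hfs k, (q zj.1 k zj.2).toReal * g (x + zj.1) zj.2 := by
  classical
  set s : Finset (Fin d → ℤ) := (Tk hfs k).image (fun zj => x + zj.1) with hs
  have h1 : ∑' y, ∑ j, (q (y - x) k j).toReal * g y j
      = ∑ y ∈ s, ∑ j, (q (y - x) k j).toReal * g y j := by
    refine tsum_eq_sum fun y hy => Finset.sum_eq_zero fun j _ => ?_
    have hq : q (y - x) k j = 0 := by
      by_contra hq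
      exact hy (Finset.mem_image.2 ⟨(y - x, j), mem_Tk.2 hq, by simp⟩)
    rw [hq, ENNReal.toReal_zero, zero_mul]
  rw [h1, ← Finset.sum_product']
  set e : (Fin d → ℤ) × Fin N → (Fin d → ℤ) × Fin N := fun zj => (x + zj.1, zj.2) with he
  have hinj : Set.InjOn e (Tk hfs k) := fun a _ b _ hab => by
    simp only [e, Prod.mk.injEq] at hab
    exact Prod.ext (add_left_cancel hab.1) hab.2
  have hsub : (Tk hfs k).image e ⊆ s ×ˢ Finset.univ := by
    intro p hp
    obtain ⟨zj, hzj, rfl⟩ := Finset.mem_image.1 hp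
    exact Finset.mem_product.2 ⟨Finset.mem_image.2 ⟨zj, hzj, rfl⟩, Finset.mem_univ _⟩
  have h2 : ∑ p ∈ s ×ˢ Finset.univ, (q (p.1 - x) k p.2).toReal * g p.1 p.2
      = ∑ p ∈ (Tk hfs k).image e, (q (p.1 - x) k p.2).toReal * g p.1 p.2 := by
    refine (Finset.sum_subset hsub fun p _ hp => ?_).symm
    have hq : q (p.1 - x) k p.2 = 0 := by
      by_contra hq
      exact hp (Finset.mem_image.2 ⟨(p.1 - x, p.2), mem_Tk.2 hq, by simp [e]⟩)
    rw [hq, ENNReal.toReal_zero, zero_mul]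
  rw [h2, Finset.sum_image (fun a ha b hb hab => hinj ha hb hab)]
  exact Finset.sum_congr rfl fun zj _ => by simp [e, add_sub_cancel_left]

lemma harm_ofReal (hM : ∀ k : Fin N, (∑' z : Fin d → ℤ, ∑ j, q z k j) = 1)
    (hfs : FinSuppKer q) {g : (Fin d → ℤ) → Fin N → ℝ}
    (hg0 : ∀ x k, 0 ≤ g x k) (hg : HarmOn hfs g) (x : Fin d → ℤ) (k : Fin N) :
    ENNReal.ofReal (g x k) = ∑' y, ∑ j, q (y - x) k j * ENNReal.ofReal (g y j) := by
  rw [row_tsum hfs (fun y j => ENNReal.ofReal (g y j)) x k, hg x k,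
    ENNReal.ofReal_sum_of_nonneg (fun zj _ => mul_nonneg ENNReal.toReal_nonneg (hg0 _ _))]
  refine Finset.sum_congr rfl fun zj _ => ?_
  rw [ENNReal.ofReal_mul ENNReal.toReal_nonneg, ENNReal.ofReal_toReal (q_ne_top hM _ _ _)]

lemma convPow_succ_def (n : ℕ) (z : Fin d → ℤ) (k j : Fin N) :
    convPow q (n + 1) z k j = ∑' w, ∑ l, q w k l * convPow q n (z - w) l j := rfl

lemma harm_convPow (hM : ∀ k : Fin N, (∑' z : Fin d → ℤ, ∑ j, q z k j) = 1)
    (hfs : FinSuppKer q) {g : (Fin d → ℤ) → Fin N → ℝ}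
    (hg0 : ∀ x k, 0 ≤ g x k) (hg : HarmOn hfs g) :
    ∀ (n : ℕ) (x : Fin d → ℤ) (k : Fin N),
      ENNReal.ofReal (g x k) = ∑' y, ∑ j, convPow q n (y - x) k j * ENNReal.ofReal (g y j) := by
  intro n
  induction n with
  | zero =>
    intro x k
    have h1 : ∀ y, y ≠ x → (∑ j, convPow q 0 (y - x) k j * ENNReal.ofReal (g y j)) = 0 := by
      intro y hy
      refine Finset.sum_eq_zero fun j _ => ?_
      have : ¬(y - x = 0 ∧ k = j) := fun hc => hy (sub_eq_zero.mp hc.1)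
      simp [convPow, this]
    rw [tsum_eq_single x h1]
    have : ∀ j, convPow q 0 (x - x) k j * ENNReal.ofReal (g x j)
        = if k = j then ENNReal.ofReal (g x j) else 0 := by
      intro j
      by_cases hkj : k = j <;> simp [convPow, hkj]
    rw [Finset.sum_congr rfl fun j _ => this j, Finset.sum_ite_eq _ k
      (fun j => ENNReal.ofReal (g x j))]
    simp
  | succ n ih =>
    intro x k
    have key : ∑' y, ∑ j, convPow q (n+1) (y - x) k j * ENNReal.ofReal (g y j)
        = ∑' y, ∑ j, ∑' b, ∑ l,
            q (b - x) k l * (convPow q n (y - b) l j * ENNReal.ofReal (g y j)) := by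
      refine tsum_congr fun y => Finset.sum_congr rfl fun j _ => ?_
      rw [convPow_succ_def, ← ENNReal.tsum_mul_right]
      rw [← Equiv.tsum_eq (Equiv.subRight x)
        (fun w => (∑ l, q w k l * convPow q n (y - x - w) l j) * ENNReal.ofReal (g y j))]
      refine tsum_congr fun b => ?_
      simp only [Equiv.subRight_apply]
      rw [Finset.sum_mul]
      refine Finset.sum_congr rfl fun l _ => ?_
      rw [sub_sub_sub_cancel_right, mul_assoc]
    have main : ∑' b, ∑ l, ∑' y, ∑ j, q (b - x) k l * (convPow q n (y - b) l j * ENNReal.ofReal (g y j)) = ENNReal.ofReal (g x k) := calc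
      ∑' b, ∑ l, ∑' y, ∑ j, q (b - x) k l * (convPow q n (y - b) l j * ENNReal.ofReal (g y j))
        = ∑' b, ∑ l, q (b - x) k l * ∑' y, ∑ j, convPow q n (y - b) l j * ENNReal.ofReal (g y j) := by
          exact tsum_congr fun b => Finset.sum_congr rfl fun l _ => by
            rw [← pull_const (q (b - x) k l) (fun y j => convPow q n (y - b) l j * ENNReal.ofReal (g y j))]
      _ = ∑' b, ∑ l, q (b - x) k l * ENNReal.ofReal (g b l) := by
          exact tsum_congr fun b => Finset.sum_congr rfl fun l _ => by rw [← ih b l]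
      _ = ENNReal.ofReal (g x k) := (harm_ofReal hM hfs hg0 hg x k).symm
    rw [key, swap4 (fun y j b l => q (b - x) k l * (convPow q n (y - b) l j * ENNReal.ofReal (g y j)))]
    exact main.symm

lemma convPow_rowsum (hM : ∀ k : Fin N, (∑' z : Fin d → ℤ, ∑ j, q z k j) = 1) :
    ∀ (n : ℕ) (k : Fin N), ∑' z, ∑ j, convPow q n z k j = 1 := by
  intro n
  induction n with
  | zero =>
    intro k
    have h1 : ∀ z : Fin d → ℤ, z ≠ 0 → (∑ j, convPow q 0 z k j) = 0 := by
      intro z hz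
      refine Finset.sum_eq_zero fun j _ => ?_
      simp [convPow, hz]
    rw [tsum_eq_single 0 h1]
    have : ∀ j, convPow q 0 (0 : Fin d → ℤ) k j = if k = j then 1 else 0 := by
      intro j; by_cases hkj : k = j <;> simp [convPow, hkj]
    rw [Finset.sum_congr rfl fun j _ => this j, Finset.sum_ite_eq _ k (fun _ => (1 : ℝ≥0∞))]
    simp
  | succ n ih =>
    intro k
    have key : ∑' z, ∑ j, convPow q (n+1) z k j
        = ∑' z, ∑ j, ∑' w, ∑ l, q w k l * convPow q n (z - w) l j :=
      tsum_congr fun z => Finset.sum_congr rfl fun j _ => convPow_succ_def n z k j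
    rw [key, swap4 (fun z j w l => q w k l * convPow q n (z - w) l j)]
    calc ∑' w, ∑ l, ∑' z, ∑ j, q w k l * convPow q n (z - w) l j
        = ∑' w, ∑ l, q w k l * ∑' z, ∑ j, convPow q n (z - w) l j := by
          exact tsum_congr fun w => Finset.sum_congr rfl fun l _ => by
            rw [← pull_const (q w k l) (fun z j => convPow q n (z - w) l j)]
      _ = ∑' w, ∑ l, q w k l := by
          refine tsum_congr fun w => Finset.sum_congr rfl fun l _ => ?_
          have : ∑' z, ∑ j, convPow q n (z - w) l j = ∑' z, ∑ j, convPow q n z l j := by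
            rw [← Equiv.tsum_eq (Equiv.addRight w) (fun z => ∑ j, convPow q n (z - w) l j)]
            exact tsum_congr fun z => by simp
          rw [this, ih l, mul_one]
      _ = 1 := hM k

lemma convPow_le_one (hM : ∀ k : Fin N, (∑' z : Fin d → ℤ, ∑ j, q z k j) = 1)
    (n : ℕ) (z : Fin d → ℤ) (k j : Fin N) : convPow q n z k j ≤ 1 := by
  calc convPow q n z k j ≤ ∑ j', convPow q n z k j' :=
        Finset.single_le_sum (f := fun j' => convPow q n z k j')
          (fun _ _ => zero_le) (Finset.mem_univ j)
    _ ≤ ∑' z', ∑ j', convPow q n z' k j' := ENNReal.le_tsum z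
    _ = 1 := convPow_rowsum hM n k

lemma convPow_ne_top (hM : ∀ k : Fin N, (∑' z : Fin d → ℤ, ∑ j, q z k j) = 1)
    (n : ℕ) (z : Fin d → ℤ) (k j : Fin N) : convPow q n z k j ≠ ∞ :=
  ((convPow_le_one hM n z k j).trans_lt ENNReal.one_lt_top).ne

/-- Harnack inequality -/
lemma harnack (hM : ∀ k : Fin N, (∑' z : Fin d → ℤ, ∑ j, q z k j) = 1)
    (hfs : FinSuppKer q) {g : (Fin d → ℤ) → Fin N → ℝ}
    (hg0 : ∀ x k, 0 ≤ g x k) (hg : HarmOn hfs g)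
    (n : ℕ) (x y : Fin d → ℤ) (k j : Fin N) :
    (convPow q n (y - x) k j).toReal * g y j ≤ g x k := by
  have hEN : convPow q n (y - x) k j * ENNReal.ofReal (g y j) ≤ ENNReal.ofReal (g x k) := by
    rw [harm_convPow hM hfs hg0 hg n x k]
    refine le_trans ?_ (ENNReal.le_tsum y)
    exact Finset.single_le_sum
      (f := fun j' => convPow q n (y - x) k j' * ENNReal.ofReal (g y j'))
      (fun j' _ => zero_le) (Finset.mem_univ j)
  have := ENNReal.toReal_mono ENNReal.ofReal_ne_top hEN
  rwa [ENNReal.toReal_mul, ENNReal.toReal_ofReal (hg0 y j), ENNReal.toReal_ofReal (hg0 x k)]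
    at this

lemma convPow_toReal_pos (hM : ∀ k : Fin N, (∑' z : Fin d → ℤ, ∑ j, q z k j) = 1)
    {n : ℕ} {z : Fin d → ℤ} {k j : Fin N} (hpos : 0 < convPow q n z k j) :
    0 < (convPow q n z k j).toReal :=
  ENNReal.toReal_pos hpos.ne' (convPow_ne_top hM n z k j)

/-- zero propagation: a nonnegative harmonic function vanishing at `(0,k₀)` vanishes -/
lemma zero_prop (hM : ∀ k : Fin N, (∑' z : Fin d → ℤ, ∑ j, q z k j) = 1)
    (hfs : FinSuppKer q) (hirr : ∀ (z : Fin d → ℤ) (k j : Fin N), ∃ n, 0 < convPow q n z k j)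
    {g : (Fin d → ℤ) → Fin N → ℝ} (hg0 : ∀ x k, 0 ≤ g x k) (hg : HarmOn hfs g)
    {k₀ : Fin N} (h0 : g 0 k₀ = 0) : ∀ y j, g y j = 0 := by
  intro y j
  obtain ⟨n, hn⟩ := hirr y k₀ j
  have hhar := harnack hM hfs hg0 hg n 0 y k₀ j
  rw [h0] at hhar
  have hy : y - 0 = y := sub_zero y
  rw [hy] at hhar
  have ht := convPow_toReal_pos hM hn
  nlinarith [hg0 y j]

/-- positivity propagation -/
lemma pos_prop (hM : ∀ k : Fin N, (∑' z : Fin d → ℤ, ∑ j, q z k j) = 1)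
    (hfs : FinSuppKer q) (hirr : ∀ (z : Fin d → ℤ) (k j : Fin N), ∃ n, 0 < convPow q n z k j)
    {g : (Fin d → ℤ) → Fin N → ℝ} (hg0 : ∀ x k, 0 ≤ g x k) (hg : HarmOn hfs g)
    {k₀ : Fin N} (h0 : 0 < g 0 k₀) : ∀ y j, 0 < g y j := by
  intro y j
  obtain ⟨n, hn⟩ := hirr (0 - y) j k₀
  have hhar := harnack hM hfs hg0 hg n y 0 j k₀
  have ht := convPow_toReal_pos hM hn
  nlinarith [hg0 y j]

lemma HarmOn.smul (hfs : FinSuppKer q) {g : (Fin d → ℤ) → Fin N → ℝ}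
    (hg : HarmOn hfs g) (c : ℝ) : HarmOn hfs (c • g) := by
  intro x k
  have := hg x k
  simp only [Pi.smul_apply, smul_eq_mul]
  rw [this, Finset.mul_sum]
  exact Finset.sum_congr rfl fun zj _ => by ring

lemma HarmOn.sub (hfs : FinSuppKer q) {g₁ g₂ : (Fin d → ℤ) → Fin N → ℝ}
    (h1 : HarmOn hfs g₁) (h2 : HarmOn hfs g₂) : HarmOn hfs (g₁ - g₂) := by
  intro x k
  simp only [Pi.sub_apply]
  rw [h1 x k, h2 x k, ← Finset.sum_sub_distrib]
  exact Finset.sum_congr rfl fun zj _ => by ring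

lemma HarmOn.translate (hfs : FinSuppKer q) {g : (Fin d → ℤ) → Fin N → ℝ}
    (hg : HarmOn hfs g) (z : Fin d → ℤ) : HarmOn hfs (fun x k => g (x + z) k) := by
  intro x k
  show g (x + z) k = ∑ zj ∈ Tk hfs k, (q zj.1 k zj.2).toReal * g ((x + zj.1) + z) zj.2
  rw [hg (x + z) k]
  exact Finset.sum_congr rfl fun zj _ => by rw [add_right_comm]

/-- the normalized set of nonnegative harmonic functions -/
def Kset (hfs : FinSuppKer q) (k₀ : Fin N) : Set ((Fin d → ℤ) → Fin N → ℝ) :=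
  {g | (∀ x k, 0 ≤ g x k) ∧ HarmOn hfs g ∧ g 0 k₀ = 1}

lemma Kset_convex (hfs : FinSuppKer q) (k₀ : Fin N) : Convex ℝ (Kset hfs k₀) := by
  rintro a ⟨ha0, haH, ha1⟩ b ⟨hb0, hbH, hb1⟩ s t hs ht hst
  refine ⟨fun x k => ?_, fun x k => ?_, ?_⟩
  · have : (s • a + t • b) x k = s * a x k + t * b x k := rfl
    rw [this]
    have := ha0 x k; have := hb0 x k
    nlinarith
  · have : (s • a + t • b) x k = s * a x k + t * b x k := rfl
    rw [this, haH x k, hbH x k, Finset.mul_sum, Finset.mul_sum, ← Finset.sum_add_distrib]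
    exact Finset.sum_congr rfl fun zj _ => by
      have : (s • a + t • b) (x + zj.1) zj.2 = s * a (x + zj.1) zj.2 + t * b (x + zj.1) zj.2 := rfl
      rw [this]; ring
  · have : (s • a + t • b) 0 k₀ = s * a 0 k₀ + t * b 0 k₀ := rfl
    rw [this, ha1, hb1]; linarith

lemma Kset_closed (hfs : FinSuppKer q) (k₀ : Fin N) : IsClosed (Kset hfs k₀) := by
  have hev : ∀ (x : Fin d → ℤ) (k : Fin N),
      Continuous (fun g : (Fin d → ℤ) → Fin N → ℝ => g x k) := fun x k =>
    (continuous_apply k).comp (continuous_apply x)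
  have h1 : IsClosed {g : (Fin d → ℤ) → Fin N → ℝ | ∀ x k, 0 ≤ g x k} := by
    have : {g : (Fin d → ℤ) → Fin N → ℝ | ∀ x k, 0 ≤ g x k}
        = ⋂ (x : Fin d → ℤ) (k : Fin N), {g | 0 ≤ g x k} := by
      ext g; simp [Set.mem_iInter]
    rw [this]
    exact isClosed_iInter fun x => isClosed_iInter fun k =>
      isClosed_le continuous_const (hev x k)
  have h2 : IsClosed {g : (Fin d → ℤ) → Fin N → ℝ | HarmOn hfs g} := by
    have : {g : (Fin d → ℤ) → Fin N → ℝ | HarmOn hfs g}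
        = ⋂ (x : Fin d → ℤ) (k : Fin N),
            {g | g x k = ∑ zj ∈ Tk hfs k, (q zj.1 k zj.2).toReal * g (x + zj.1) zj.2} := by
      ext g; simp only [Set.mem_iInter, Set.mem_setOf_eq]; exact Iff.rfl
    rw [this]
    refine isClosed_iInter fun x => isClosed_iInter fun k => isClosed_eq (hev x k) ?_
    exact continuous_finset_sum _ fun zj _ => (continuous_const.mul (hev (x + zj.1) zj.2))
  have h3 : IsClosed {g : (Fin d → ℤ) → Fin N → ℝ | g 0 k₀ = 1} :=
    isClosed_eq (hev 0 k₀) continuous_const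
  have : Kset hfs k₀ = {g | ∀ x k, 0 ≤ g x k} ∩ ({g | HarmOn hfs g} ∩ {g | g 0 k₀ = 1}) := by
    ext g; simp [Kset, Set.mem_setOf_eq, and_assoc]
  rw [this]
  exact h1.inter (h2.inter h3)

lemma Kset_compact (hM : ∀ k : Fin N, (∑' z : Fin d → ℤ, ∑ j, q z k j) = 1)
    (hfs : FinSuppKer q) (hirr : ∀ (z : Fin d → ℤ) (k j : Fin N), ∃ n, 0 < convPow q n z k j)
    (k₀ : Fin N) : IsCompact (Kset hfs k₀) := by
  classical
  -- uniform Harnack bound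
  set C : (Fin d → ℤ) → Fin N → ℝ := fun y j =>
    ((convPow q (hirr y k₀ j).choose y k₀ j).toReal)⁻¹ with hC
  have hbound : ∀ g ∈ Kset hfs k₀, ∀ y j, g y j ∈ Set.Icc (0:ℝ) (C y j) := by
    rintro g ⟨hg0, hgH, hg1⟩ y j
    refine ⟨hg0 y j, ?_⟩
    have hn := (hirr y k₀ j).choose_spec
    have hhar := harnack hM hfs hg0 hgH (hirr y k₀ j).choose 0 y k₀ j
    rw [sub_zero, hg1] at hhar
    have ht := convPow_toReal_pos hM hn
    have h2 : g y j ≤ 1 / (convPow q (hirr y k₀ j).choose y k₀ j).toReal :=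
      (le_div_iff₀ ht).2 (by linarith [mul_comm (convPow q (hirr y k₀ j).choose y k₀ j).toReal (g y j)])
    rw [hC]
    simpa [one_div] using h2
  have hsub : Kset hfs k₀ ⊆ Set.pi Set.univ (fun y => Set.pi Set.univ fun j => Set.Icc (0:ℝ) (C y j)) := by
    intro g hg
    intro y _
    intro j _
    exact hbound g hg y j
  have hcomp : IsCompact (Set.pi Set.univ (fun y : Fin d → ℤ =>
      Set.pi Set.univ fun j : Fin N => Set.Icc (0:ℝ) (C y j))) :=
    isCompact_univ_pi fun y => isCompact_univ_pi fun j => isCompact_Icc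
  exact hcomp.of_isClosed_subset (Kset_closed hfs k₀) hsub

lemma extreme_translate (hM : ∀ k : Fin N, (∑' z : Fin d → ℤ, ∑ j, q z k j) = 1)
    (hfs : FinSuppKer q) (hirr : ∀ (z : Fin d → ℤ) (k j : Fin N), ∃ n, 0 < convPow q n z k j)
    (k₀ : Fin N) {φ : (Fin d → ℤ) → Fin N → ℝ}
    (hφ : φ ∈ (Kset hfs k₀).extremePoints ℝ) (z : Fin d → ℤ) :
    ∀ x k, φ (x + z) k = φ z k₀ * φ x k := by
  classical
  obtain ⟨hφK, hext⟩ := hφ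
  obtain ⟨hφ0, hφH, hφ1⟩ := hφK
  have hφpos : ∀ y j, 0 < φ y j := pos_prop hM hfs hirr hφ0 hφH (by rw [hφ1]; norm_num)
  set g : (Fin d → ℤ) → Fin N → ℝ := fun x k => φ (x + z) k with hg
  have hgH : HarmOn hfs g := HarmOn.translate hfs hφH z
  have hg0 : ∀ x k, 0 ≤ g x k := fun x k => (hφpos _ _).le
  -- uniform Harnack constant
  have : Nonempty (Fin N) := ⟨k₀⟩
  set t : Fin N → ℝ := fun k => (convPow q (hirr z k k).choose z k k).toReal with ht
  have htpos : ∀ k, 0 < t k := fun k => convPow_toReal_pos hM (hirr z k k).choose_spec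
  set Cz : ℝ := ∑ k, (t k)⁻¹ with hCz
  have hCzpos : 0 < Cz :=
    Finset.sum_pos (fun k _ => inv_pos.2 (htpos k)) Finset.univ_nonempty
  have hdom : ∀ x k, g x k ≤ Cz * φ x k := by
    intro x k
    have hhar := harnack hM hfs hφ0 hφH (hirr z k k).choose x (x + z) k k
    rw [add_sub_cancel_left] at hhar
    have h1 : g x k ≤ (t k)⁻¹ * φ x k := by
      rw [← div_eq_inv_mul]
      exact (le_div_iff₀ (htpos k)).2 (by
        calc g x k * t k = t k * φ (x + z) k := by rw [hg]; ring
          _ ≤ φ x k := hhar)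
    refine h1.trans (mul_le_mul_of_nonneg_right ?_ (hφ0 x k))
    exact Finset.single_le_sum (f := fun k' => (t k')⁻¹)
      (fun k' _ => (inv_pos.2 (htpos k')).le) (Finset.mem_univ k)
  set L : ℝ := φ z k₀ with hLdef
  have hL : 0 < L := hφpos z k₀
  have hgL : g 0 k₀ = L := by rw [hg]; simp [hLdef]
  have hLC : L ≤ Cz := by
    have := hdom 0 k₀
    rwa [hgL, hφ1, mul_one] at this
  -- the complementary harmonic function
  set ψ : (Fin d → ℤ) → Fin N → ℝ := Cz • φ - g with hψ
  have hψH : HarmOn hfs ψ := HarmOn.sub hfs (HarmOn.smul hfs hφH Cz) hgH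
  have hψ0 : ∀ x k, 0 ≤ ψ x k := by
    intro x k
    have : ψ x k = Cz * φ x k - g x k := rfl
    rw [this]
    linarith [hdom x k]
  have hψval : ψ 0 k₀ = Cz - L := by
    have : ψ 0 k₀ = Cz * φ 0 k₀ - g 0 k₀ := rfl
    rw [this, hφ1, hgL, mul_one]
  rcases eq_or_lt_of_le hLC with hEq | hLt
  · -- L = Cz : ψ vanishes at the base point, hence everywhere
    have hz : ψ 0 k₀ = 0 := by rw [hψval, ← hEq, sub_self]
    have hzero := zero_prop hM hfs hirr hψ0 hψH hz
    intro x k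
    have := hzero x k
    have h2 : ψ x k = Cz * φ x k - g x k := rfl
    rw [h2] at this
    have h4 : g x k = Cz * φ x k := by linarith
    show φ (x + z) k = L * φ x k
    rw [hEq]
    exact h4
  · -- L < Cz : φ is a proper convex combination
    set a : (Fin d → ℤ) → Fin N → ℝ := L⁻¹ • g with ha
    set b : (Fin d → ℤ) → Fin N → ℝ := (Cz - L)⁻¹ • ψ with hb
    have haK : a ∈ Kset hfs k₀ := by
      refine ⟨fun x k => ?_, HarmOn.smul hfs hgH L⁻¹, ?_⟩
      · have h5 : a x k = L⁻¹ * g x k := rfl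
        rw [h5]
        exact mul_nonneg (inv_pos.2 hL).le (hg0 x k)
      · have : a 0 k₀ = L⁻¹ * g 0 k₀ := rfl
        rw [this, hgL, inv_mul_cancel₀ hL.ne']
    have hbK : b ∈ Kset hfs k₀ := by
      refine ⟨fun x k => ?_, HarmOn.smul hfs hψH (Cz - L)⁻¹, ?_⟩
      · have : b x k = (Cz - L)⁻¹ * ψ x k := rfl
        rw [this]
        have hpos : (0:ℝ) < (Cz - L)⁻¹ := inv_pos.2 (by linarith)
        exact mul_nonneg hpos.le (hψ0 x k)
      · have : b 0 k₀ = (Cz - L)⁻¹ * ψ 0 k₀ := rfl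
        rw [this, hψval, inv_mul_cancel₀ (by linarith : Cz - L ≠ 0)]
    have hseg : φ ∈ openSegment ℝ a b := by
      refine ⟨L / Cz, (Cz - L) / Cz, div_pos hL hCzpos, div_pos (by linarith) hCzpos, by field_simp; ring, ?_⟩
      funext x
      funext k
      have h1 : ((L / Cz) • a + ((Cz - L) / Cz) • b) x k
          = (L / Cz) * (L⁻¹ * g x k) + ((Cz - L) / Cz) * ((Cz - L)⁻¹ * (Cz * φ x k - g x k)) := rfl
      rw [h1]
      have hCne : Cz ≠ 0 := hCzpos.ne'
      have hLne : L ≠ 0 := hL.ne'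
      have hdne : Cz - L ≠ 0 := ne_of_gt (by linarith)
      field_simp
      ring
    have haφ := hext haK hbK hseg
    intro x k
    have : a x k = φ x k := by rw [haφ]
    have h2 : L⁻¹ * g x k = φ x k := this
    have h3 : g x k = L * φ x k := by
      field_simp at h2
      linarith [h2]
    exact h3

lemma char_linear {d : ℕ} (c : (Fin d → ℤ) → ℝ) (hpos : ∀ z, 0 < c z)
    (hmul : ∀ z w, c (z + w) = c z * c w) (z : Fin d → ℤ) :
    Real.log (c z) = ∑ i, (z i : ℝ) * Real.log (c (Pi.single i 1)) := by
  classical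
  have hadd : ∀ z w : Fin d → ℤ, Real.log (c (z + w)) = Real.log (c z) + Real.log (c w) :=
    fun z w => by rw [hmul, Real.log_mul (hpos z).ne' (hpos w).ne']
  set ψ : (Fin d → ℤ) →+ ℝ := AddMonoidHom.mk' (fun z => Real.log (c z)) hadd with hψ
  have hsingle : ∀ i, Pi.single i (z i) = z i • (Pi.single i 1 : Fin d → ℤ) := by
    intro i
    ext j
    by_cases hji : j = i
    · subst hji; simp
    · simp [Pi.single_apply, hji]
  calc Real.log (c z) = ψ z := rfl
    _ = ψ (∑ i, Pi.single i (z i)) := by rw [Finset.univ_sum_single]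
    _ = ∑ i, ψ (Pi.single i (z i)) := map_sum ψ _ _
    _ = ∑ i, (z i : ℝ) * Real.log (c (Pi.single i 1)) := by
        refine Finset.sum_congr rfl fun i _ => ?_
        rw [hsingle i, map_zsmul ψ, zsmul_eq_mul]
        rfl

lemma extreme_eq_one
    (hM : ∀ k : Fin N, (∑' z : Fin d → ℤ, ∑ j, q z k j) = 1)
    (hfs : FinSuppKer q)
    (hirr : ∀ (z : Fin d → ℤ) (k j : Fin N), ∃ n, 0 < convPow q n z k j)
    (ν₀ : Fin N → ℝ) (hν₀pos : ∀ k, 0 < ν₀ k)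
    (hν₀stat : Matrix.vecMul ν₀ (FmatR q 0) = ν₀)
    (hcen : driftVec q ν₀ = 0) (k₀ : Fin N)
    {φ : (Fin d → ℤ) → Fin N → ℝ}
    (hφ : φ ∈ (Kset hfs k₀).extremePoints ℝ) :
    φ = fun _ _ => (1:ℝ) := by
  classical
  have key : ∀ (z x : Fin d → ℤ) (k : Fin N), φ (x + z) k = φ z k₀ * φ x k :=
    fun z => extreme_translate hM hfs hirr k₀ hφ z
  obtain ⟨⟨hφ0, hφH, hφ1⟩, -⟩ := hφ
  have hφpos : ∀ y j, 0 < φ y j := pos_prop hM hfs hirr hφ0 hφH (by rw [hφ1]; norm_num)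
  set c : (Fin d → ℤ) → ℝ := fun z => φ z k₀ with hc
  have hcpos : ∀ z, 0 < c z := fun z => hφpos z k₀
  have hc0 : c 0 = 1 := hφ1
  have hmul : ∀ z w, c (z + w) = c z * c w := by
    intro z w
    calc c (z + w) = φ (w + z) k₀ := by rw [add_comm]
      _ = c z * c w := key z w k₀
  set f : Fin N → ℝ := fun k => φ 0 k with hf
  have hfpos : ∀ k, 0 < f k := fun k => hφpos 0 k
  have hfk₀ : f k₀ = 1 := hφ1
  have hφeq : ∀ x k, φ x k = c x * f k := by
    intro x k
    have := key x 0 k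
    rwa [zero_add] at this
  -- the eigenvector equation
  set lg : ((Fin d → ℤ) × Fin N) → ℝ := fun zj => c zj.1 * f zj.2 with hlg
  have hlgpos : ∀ zj, 0 < lg zj := fun zj => mul_pos (hcpos _) (hfpos _)
  have heig : ∀ k, f k = ∑ zj ∈ Tk hfs k, (q zj.1 k zj.2).toReal * lg zj := by
    intro k
    have h1 := hφH 0 k
    calc f k = φ 0 k := rfl
      _ = ∑ zj ∈ Tk hfs k, (q zj.1 k zj.2).toReal * φ (0 + zj.1) zj.2 := h1
      _ = ∑ zj ∈ Tk hfs k, (q zj.1 k zj.2).toReal * lg zj := by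
          refine Finset.sum_congr rfl fun zj _ => ?_
          rw [zero_add, hφeq]
  have hwsum : ∀ k, ∑ zj ∈ Tk hfs k, (q zj.1 k zj.2).toReal = 1 := rowsum_one_real hM hfs
  have hwpos : ∀ k, ∀ zj ∈ Tk hfs k, 0 < (q zj.1 k zj.2).toReal := fun k zj hzj =>
    ENNReal.toReal_pos (mem_Tk.1 hzj) (q_ne_top hM _ _ _)
  have hTne : ∀ k, (Tk hfs k).Nonempty := by
    intro k
    rcases Finset.eq_empty_or_nonempty (Tk hfs k) with hTe | hTn
    · exfalso
      have := hwsum k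
      rw [hTe, Finset.sum_empty] at this
      norm_num at this
    · exact hTn
  -- Jensen inequality for each k
  set A : Fin N → ℝ := fun k => ∑ zj ∈ Tk hfs k, (q zj.1 k zj.2).toReal * Real.log (lg zj)
    with hA
  set B : Fin N → ℝ := fun k => Real.log (f k) with hB
  have hAB : ∀ k, A k ≤ B k := by
    intro k
    have hj := (strictConcaveOn_log_Ioi.concaveOn).le_map_sum
      (t := Tk hfs k) (w := fun zj => (q zj.1 k zj.2).toReal) (p := lg)
      (fun zj _ => ENNReal.toReal_nonneg) (hwsum k)
      (fun zj _ => Set.mem_Ioi.2 (hlgpos zj))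
    have h2 : ∑ zj ∈ Tk hfs k, (q zj.1 k zj.2).toReal • lg zj = f k := by
      rw [heig k]
      exact Finset.sum_congr rfl fun zj _ => rfl
    rw [h2] at hj
    calc A k = ∑ zj ∈ Tk hfs k, (q zj.1 k zj.2).toReal • Real.log (lg zj) := by
          exact Finset.sum_congr rfl fun zj _ => rfl
      _ ≤ Real.log (f k) := hj
  -- the global identity
  set u : Fin d → ℝ := fun i => Real.log (c (Pi.single i 1)) with hu
  have hclin : ∀ z, Real.log (c z) = ∑ i, (z i : ℝ) * u i := char_linear c hcpos hmul
  set Z : Finset (Fin d → ℤ) := Finset.univ.biUnion (fun k => (Tk hfs k).image Prod.fst) with hZ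
  have hZmem : ∀ (k : Fin N), ∀ zj ∈ Tk hfs k, zj.1 ∈ Z := by
    intro k zj hzj
    exact Finset.mem_biUnion.2 ⟨k, Finset.mem_univ k, Finset.mem_image.2 ⟨zj, hzj, rfl⟩⟩
  have hZq : ∀ z ∉ Z, ∀ (k j : Fin N), q z k j = 0 := by
    intro z hz k j
    by_contra hq
    exact hz (hZmem k (z, j) (mem_Tk.2 hq))
  -- per-row transfer from `Tk` to product sums
  have hrow_prod : ∀ (k : Fin N) (G : (Fin d → ℤ) → Fin N → ℝ),
      ∑ zj ∈ Tk hfs k, (q zj.1 k zj.2).toReal * G zj.1 zj.2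
        = ∑ z ∈ Z, ∑ j, (q z k j).toReal * G z j := by
    intro k G
    rw [← Finset.sum_product']
    refine Finset.sum_subset ?_ ?_
    · intro zj hzj
      exact Finset.mem_product.2 ⟨hZmem k zj hzj, Finset.mem_univ _⟩
    · intro zj _ hzj
      rw [q_notmem_Tk hzj, ENNReal.toReal_zero, zero_mul]
  -- drift identity
  have hdrift : ∀ i, (driftVec q ν₀) i
      = ∑ k, ν₀ k * ∑ zj ∈ Tk hfs k, (q zj.1 k zj.2).toReal * (zj.1 i : ℝ) := by
    intro i
    have h1 : (driftVec q ν₀) i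
        = ∑ z ∈ Z, ∑ k, ∑ j, ν₀ k * (z i : ℝ) * (q z k j).toReal := by
      refine tsum_eq_sum fun z hz => ?_
      refine Finset.sum_eq_zero fun k _ => Finset.sum_eq_zero fun j _ => ?_
      rw [hZq z hz k j, ENNReal.toReal_zero, mul_zero]
    rw [h1, Finset.sum_comm]
    refine Finset.sum_congr rfl fun k _ => ?_
    rw [hrow_prod k (fun z j => (z i : ℝ)), Finset.mul_sum]
    refine Finset.sum_congr rfl fun z _ => ?_
    rw [Finset.mul_sum]
    refine Finset.sum_congr rfl fun j _ => by ring
  -- stationarity identity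
  have hFmat0 : ∀ (k j : Fin N), FmatR q 0 k j = ∑ z ∈ Z, (q z k j).toReal := by
    intro k j
    have h1 : Fmat q 0 k j = ∑' z, q z k j := by
      have : ∀ z : Fin d → ℤ, dotZ (0 : Fin d → ℝ) z = 0 := by
        intro z; simp [dotZ]
      simp only [Fmat, Matrix.of_apply, this, Real.exp_zero, ENNReal.ofReal_one, mul_one]
    have h2 : (∑' z, q z k j) = ∑ z ∈ Z, q z k j := by
      refine tsum_eq_sum fun z hz => hZq z hz k j
    rw [FmatR, Matrix.of_apply, h1, h2, ENNReal.toReal_sum fun z _ => q_ne_top hM z k j]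
  have hstat : ∀ j, ∑ k, ν₀ k * FmatR q 0 k j = ν₀ j := by
    intro j
    have := congrFun hν₀stat j
    rw [Matrix.vecMul, dotProduct] at this
    exact this
  -- split A
  have hAsplit : ∀ k, A k
      = (∑ zj ∈ Tk hfs k, (q zj.1 k zj.2).toReal * Real.log (c zj.1))
        + ∑ zj ∈ Tk hfs k, (q zj.1 k zj.2).toReal * Real.log (f zj.2) := by
    intro k
    rw [hA, ← Finset.sum_add_distrib]
    refine Finset.sum_congr rfl fun zj _ => ?_
    rw [hlg]
    rw [Real.log_mul (hcpos zj.1).ne' (hfpos zj.2).ne']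
    ring
  have hglobal : ∑ k, ν₀ k * A k = ∑ k, ν₀ k * B k := by
    have h1 : ∀ k, ∑ zj ∈ Tk hfs k, (q zj.1 k zj.2).toReal * Real.log (c zj.1)
        = ∑ i, (∑ zj ∈ Tk hfs k, (q zj.1 k zj.2).toReal * (zj.1 i : ℝ)) * u i := by
      intro k
      calc ∑ zj ∈ Tk hfs k, (q zj.1 k zj.2).toReal * Real.log (c zj.1)
          = ∑ zj ∈ Tk hfs k, ∑ i, (q zj.1 k zj.2).toReal * ((zj.1 i : ℝ) * u i) := by
            refine Finset.sum_congr rfl fun zj _ => ?_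
            rw [hclin zj.1, Finset.mul_sum]
        _ = ∑ i, ∑ zj ∈ Tk hfs k, (q zj.1 k zj.2).toReal * ((zj.1 i : ℝ) * u i) :=
            Finset.sum_comm
        _ = ∑ i, (∑ zj ∈ Tk hfs k, (q zj.1 k zj.2).toReal * (zj.1 i : ℝ)) * u i := by
            refine Finset.sum_congr rfl fun i _ => ?_
            rw [Finset.sum_mul]
            exact Finset.sum_congr rfl fun zj _ => by ring
    have hS1 : ∑ k, ν₀ k * ∑ zj ∈ Tk hfs k, (q zj.1 k zj.2).toReal * Real.log (c zj.1) = 0 :=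
      calc ∑ k, ν₀ k * ∑ zj ∈ Tk hfs k, (q zj.1 k zj.2).toReal * Real.log (c zj.1)
          = ∑ k, ∑ i, ν₀ k * ((∑ zj ∈ Tk hfs k, (q zj.1 k zj.2).toReal * (zj.1 i : ℝ)) * u i) := by
            refine Finset.sum_congr rfl fun k _ => ?_
            rw [h1 k, Finset.mul_sum]
        _ = ∑ i, ∑ k, ν₀ k * ((∑ zj ∈ Tk hfs k, (q zj.1 k zj.2).toReal * (zj.1 i : ℝ)) * u i) :=
            Finset.sum_comm
        _ = ∑ i, (driftVec q ν₀ i) * u i := by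
            refine Finset.sum_congr rfl fun i _ => ?_
            rw [hdrift i, Finset.sum_mul]
            exact Finset.sum_congr rfl fun k _ => by ring
        _ = 0 := by
            rw [hcen]
            simp
    have h2 : ∀ k, ∑ zj ∈ Tk hfs k, (q zj.1 k zj.2).toReal * Real.log (f zj.2)
        = ∑ j, FmatR q 0 k j * Real.log (f j) := by
      intro k
      rw [hrow_prod k (fun z j => Real.log (f j)), Finset.sum_comm]
      refine Finset.sum_congr rfl fun j _ => ?_
      rw [hFmat0 k j, Finset.sum_mul]
    have hS2 : ∑ k, ν₀ k * ∑ zj ∈ Tk hfs k, (q zj.1 k zj.2).toReal * Real.log (f zj.2)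
        = ∑ j, ν₀ j * Real.log (f j) :=
      calc ∑ k, ν₀ k * ∑ zj ∈ Tk hfs k, (q zj.1 k zj.2).toReal * Real.log (f zj.2)
          = ∑ k, ∑ j, ν₀ k * (FmatR q 0 k j * Real.log (f j)) := by
            refine Finset.sum_congr rfl fun k _ => ?_
            rw [h2 k, Finset.mul_sum]
        _ = ∑ j, ∑ k, ν₀ k * (FmatR q 0 k j * Real.log (f j)) := Finset.sum_comm
        _ = ∑ j, ν₀ j * Real.log (f j) := by
            refine Finset.sum_congr rfl fun j _ => ?_
            rw [← hstat j, Finset.sum_mul]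
            exact Finset.sum_congr rfl fun k _ => by ring
    calc ∑ k, ν₀ k * A k
        = ∑ k, (ν₀ k * ∑ zj ∈ Tk hfs k, (q zj.1 k zj.2).toReal * Real.log (c zj.1)
            + ν₀ k * ∑ zj ∈ Tk hfs k, (q zj.1 k zj.2).toReal * Real.log (f zj.2)) := by
          refine Finset.sum_congr rfl fun k _ => ?_
          rw [hAsplit k, mul_add]
      _ = (∑ k, ν₀ k * ∑ zj ∈ Tk hfs k, (q zj.1 k zj.2).toReal * Real.log (c zj.1))
            + ∑ k, ν₀ k * ∑ zj ∈ Tk hfs k, (q zj.1 k zj.2).toReal * Real.log (f zj.2) :=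
          Finset.sum_add_distrib
      _ = ∑ j, ν₀ j * Real.log (f j) := by rw [hS1, hS2, zero_add]
      _ = ∑ k, ν₀ k * B k := rfl
  -- extract per-k equality
  have hAeqB : ∀ k, A k = B k := by
    by_contra hcon
    push_neg at hcon
    obtain ⟨k, hk⟩ := hcon
    have hstrict : ∑ k, ν₀ k * A k < ∑ k, ν₀ k * B k := by
      refine Finset.sum_lt_sum (fun i _ => mul_le_mul_of_nonneg_left (hAB i) (hν₀pos i).le) ?_
      exact ⟨k, Finset.mem_univ k,
        mul_lt_mul_of_pos_left (lt_of_le_of_ne (hAB k) hk) (hν₀pos k)⟩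
    exact absurd hglobal hstrict.ne
  -- equality case of Jensen: `lg` is constant on each row support
  have hconst : ∀ (k : Fin N), ∀ zj ∈ Tk hfs k, lg zj = f k := by
    intro k
    have hsmul : ∑ zj ∈ Tk hfs k, (q zj.1 k zj.2).toReal • lg zj = f k := by
      rw [heig k]
      exact Finset.sum_congr rfl fun zj _ => rfl
    have heqc : ∀ zj ∈ Tk hfs k, ∀ zj' ∈ Tk hfs k, lg zj = lg zj' := by
      refine strictConcaveOn_log_Ioi.eq_of_map_sum_eq
        (t := Tk hfs k) (w := fun zj => (q zj.1 k zj.2).toReal) (p := lg)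
        (hwpos k) (hwsum k) (fun zj _ => Set.mem_Ioi.2 (hlgpos zj)) ?_
      rw [hsmul]
      have hBA := (hAeqB k).symm.le
      calc Real.log (f k) = B k := rfl
        _ ≤ A k := hBA
        _ = ∑ zj ∈ Tk hfs k, (q zj.1 k zj.2).toReal • Real.log (lg zj) := by
            exact Finset.sum_congr rfl fun zj _ => rfl
    obtain ⟨zj₀, hzj₀⟩ := hTne k
    intro zj hzj
    have hval : lg zj = lg zj₀ := heqc zj hzj zj₀ hzj₀
    have : f k = lg zj₀ := by
      rw [← hsmul]
      calc ∑ zj' ∈ Tk hfs k, (q zj'.1 k zj'.2).toReal • lg zj'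
          = ∑ zj' ∈ Tk hfs k, (q zj'.1 k zj'.2).toReal * lg zj₀ := by
            refine Finset.sum_congr rfl fun zj' hzj' => ?_
            rw [smul_eq_mul, heqc zj' hzj' zj₀ hzj₀]
        _ = (∑ zj' ∈ Tk hfs k, (q zj'.1 k zj'.2).toReal) * lg zj₀ := by
            rw [Finset.sum_mul]
        _ = lg zj₀ := by rw [hwsum k, one_mul]
    rw [hval, ← this]
  have hstep : ∀ (k : Fin N) (z : Fin d → ℤ) (j : Fin N), q z k j ≠ 0 → c z * f j = f k :=
    fun k z j hq => hconst k (z, j) (mem_Tk.2 hq)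
  -- propagate along convolution powers
  have hchain : ∀ (n : ℕ) (z : Fin d → ℤ) (k j : Fin N),
      convPow q n z k j ≠ 0 → c z * f j = f k := by
    intro n
    induction n with
    | zero =>
      intro z k j hne
      by_cases hcond : z = 0 ∧ k = j
      · obtain ⟨rfl, rfl⟩ := hcond
        rw [hc0, one_mul]
      · exact absurd (by simp [convPow, hcond]) hne
    | succ n ih =>
      intro z k j hne
      rw [convPow_succ_def] at hne
      have hex : ∃ w, (∑ l, q w k l * convPow q n (z - w) l j) ≠ 0 := by
        by_contra hall
        push_neg at hall
        exact hne (ENNReal.tsum_eq_zero.2 hall)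
      obtain ⟨w, hw⟩ := hex
      obtain ⟨l, -, hl⟩ := Finset.exists_ne_zero_of_sum_ne_zero hw
      have hq : q w k l ≠ 0 := fun h0 => hl (by rw [h0, zero_mul])
      have hcp : convPow q n (z - w) l j ≠ 0 := fun h0 => hl (by rw [h0, mul_zero])
      have h1 := hstep k w l hq
      have h2 := ih (z - w) l j hcp
      have h3 : c z = c (z - w) * c w := by
        rw [← hmul, sub_add_cancel]
      calc c z * f j = c w * (c (z - w) * f j) := by rw [h3]; ring
        _ = c w * f l := by rw [h2]
        _ = f k := h1
  have hcone : ∀ z, c z = 1 := by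
    intro z
    obtain ⟨n, hn⟩ := hirr z k₀ k₀
    have := hchain n z k₀ k₀ hn.ne'
    rwa [hfk₀, mul_one] at this
  have hfone : ∀ k, f k = 1 := by
    intro k
    obtain ⟨n, hn⟩ := hirr 0 k k₀
    have := hchain n 0 k k₀ hn.ne'
    rw [hfk₀, mul_one, hc0] at this
    exact this.symm
  funext x k
  rw [hφeq x k, hcone x, hfone k, one_mul]

end S17

/-- for `d ≥ 3` and an irreducible, `ℤ^d`-invariant, finitely supported,
centered Markov kernel on `ℤ^d × {1,…,N}` (with stationary vector `ν₀` and drift `p⃗ = 0`),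
every nonnegative harmonic function is constant; in particular the Martin boundary is
trivial. -/
theorem stmt17 {d N : ℕ} (hN : 0 < N) (hd : 3 ≤ d)
    (q : (Fin d → ℤ) → Fin N → Fin N → ℝ≥0∞)
    (hM : ∀ k : Fin N, (∑' z : Fin d → ℤ, ∑ j, q z k j) = 1)
    (hfs : FinSuppKer q)
    (hirr : IrreducibleKer q)
    (ν₀ : Fin N → ℝ) (hν₀pos : ∀ k, 0 < ν₀ k) (hν₀sum : ∑ k, ν₀ k = 1)
    (hν₀stat : Matrix.vecMul ν₀ (FmatR q 0) = ν₀)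
    (hcen : driftVec q ν₀ = 0)
    (h : (Fin d → ℤ) → Fin N → ℝ) (hpos : ∀ x k, 0 ≤ h x k)
    (hharm : ∀ (x : Fin d → ℤ) (k : Fin N),
      h x k = ∑' y : Fin d → ℤ, ∑ j, (q (y - x) k j).toReal * h y j) :
    ∃ c : ℝ, ∀ (x : Fin d → ℤ) (k : Fin N), h x k = c := by
  classical
  set k₀ : Fin N := ⟨0, hN⟩ with hk₀
  have hirr' : ∀ (z : Fin d → ℤ) (k j : Fin N), ∃ n : ℕ, 0 < convPow q n z k j := hirr
  have hH : HarmOn hfs h := by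
    intro x k
    rw [hharm x k]
    exact row_tsum_real hfs h x k
  rcases eq_or_lt_of_le (hpos 0 k₀) with h0 | hpos0
  · exact ⟨0, fun x k => zero_prop hM hfs hirr' hpos hH h0.symm x k⟩
  · refine ⟨h 0 k₀, fun x k => ?_⟩
    set L : ℝ := h 0 k₀ with hL
    set φ : (Fin d → ℤ) → Fin N → ℝ := L⁻¹ • h with hφdef
    have hφK : φ ∈ Kset hfs k₀ := by
      refine ⟨fun x k => mul_nonneg (inv_pos.2 hpos0).le (hpos x k),
        HarmOn.smul hfs hH L⁻¹, ?_⟩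
      show L⁻¹ * h 0 k₀ = 1
      rw [inv_mul_cancel₀ hpos0.ne']
    have hKM := closure_convexHull_extremePoints (Kset_compact hM hfs hirr' k₀)
      (Kset_convex hfs k₀)
    have hsub : (Kset hfs k₀).extremePoints ℝ ⊆ {(fun _ _ => (1:ℝ))} := fun ψ hψ =>
      Set.mem_singleton_iff.2 (extreme_eq_one hM hfs hirr' ν₀ hν₀pos hν₀stat hcen k₀ hψ)
    have hKsub : Kset hfs k₀ ⊆ {(fun _ _ => (1:ℝ))} := by
      rw [← hKM]
      calc closure (convexHull ℝ ((Kset hfs k₀).extremePoints ℝ))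
          ⊆ closure (convexHull ℝ {(fun _ _ => (1:ℝ))}) :=
            closure_mono (convexHull_mono hsub)
        _ = closure {(fun _ _ => (1:ℝ))} := by rw [convexHull_singleton]
        _ = {(fun _ _ => (1:ℝ))} := closure_singleton
    have hφ1 : φ = fun _ _ => (1:ℝ) := Set.mem_singleton_iff.1 (hKsub hφK)
    have h2 : L⁻¹ * h x k = 1 := congrFun (congrFun hφ1 x) k
    have h3 : h x k = L := by
      field_simp at h2
      linarith
    exact h3
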